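/- arXiv:math/0212288 — 3 statements merged into one kernel-verified Lean document; each statement's English description precedes it below -/
import Mathlib

section
/- Let a > 0, p > 2, y > 0, c ∈ ℝ. Define v(t) = c / (1 + a·2^{-p}(p-1)·F_p(y-t,y)·|c|^{p-1})^{1/(p-1)} for 0 ≤ t < y, where F_p(x,y) = (x^{2-p}-y^{2-p})/(p-2). Then |v(t)| ≤ (a·2^{-p}(p-1)·F_p(y-t,y))^{-1/(p-1)} for all 0 < t < y; in particular v(t) → 0 as t → y⁻. -/
open Real Set Filter Topology

/-- `Fp p x y = ∫ x^y s^{1-p} ds` evaluated explicitly for `p > 2`. -/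
noncomputable def Fp (p x y : ℝ) : ℝ := (x ^ (2 - p) - y ^ (2 - p)) / (p - 2)

theorem stmt_3 (p a y c : ℝ) (hp : 2 < p) (ha : 0 < a) (hy : 0 < y)
    (v : ℝ → ℝ)
    (hv : ∀ t, v t = c / (1 + a * 2 ^ (-p) * (p - 1) * Fp p (y - t) y * |c| ^ (p - 1))
        ^ (1 / (p - 1))) :
    (∀ t, 0 < t → t < y →
      |v t| ≤ (a * 2 ^ (-p) * (p - 1) * Fp p (y - t) y) ^ (-(1 / (p - 1)))) ∧
    Filter.Tendsto v (nhdsWithin y (Set.Iio y)) (nhds 0) := by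
  have hp1 : (0:ℝ) < p - 1 := by linarith
  have hp2 : (0:ℝ) < p - 2 := by linarith
  have hr : (0:ℝ) < 1 / (p - 1) := by positivity
  have h2 : (0:ℝ) < (2:ℝ) ^ (-p) := Real.rpow_pos_of_pos (by norm_num) _
  have hK : 0 < a * 2 ^ (-p) * (p - 1) := by positivity
  set K := a * 2 ^ (-p) * (p - 1) with hKdef
  have hF : ∀ t, 0 < t → t < y → 0 < Fp p (y - t) y := by
    intro t ht hty
    have hx : 0 < y - t := by linarith
    have hlt : y ^ (2 - p) < (y - t) ^ (2 - p) :=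
      Real.rpow_lt_rpow_of_neg hx (by linarith) (by linarith)
    have hnum : 0 < (y - t) ^ (2 - p) - y ^ (2 - p) := by linarith
    unfold Fp
    positivity
  constructor
  · intro t ht hty
    have hx : 0 < y - t := by linarith
    have hFt := hF t ht hty
    set F := Fp p (y - t) y with hFdef
    have hcp : 0 ≤ |c| ^ (p - 1) := Real.rpow_nonneg (abs_nonneg c) _
    have hD : 0 < 1 + K * F * |c| ^ (p - 1) := by positivity
    have hDr : 0 < (1 + K * F * |c| ^ (p - 1)) ^ (1 / (p - 1)) :=
      Real.rpow_pos_of_pos hD _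
    have hKFr : 0 < (K * F) ^ (1 / (p - 1)) := Real.rpow_pos_of_pos (by positivity) _
    rw [hv t, abs_div, abs_of_pos hDr, Real.rpow_neg (by positivity : (0:ℝ) ≤ K * F)]
    rw [div_le_iff₀ hDr, inv_mul_eq_div, le_div_iff₀ hKFr]
    have key : |c| * (K * F) ^ (1 / (p - 1))
        = (|c| ^ (p - 1) * (K * F)) ^ (1 / (p - 1)) := by
      rw [Real.mul_rpow hcp (by positivity), ← Real.rpow_mul (abs_nonneg c),
        mul_one_div, div_self (ne_of_gt hp1), Real.rpow_one]
    calc |c| * (K * F) ^ (1 / (p - 1))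
        = (|c| ^ (p - 1) * (K * F)) ^ (1 / (p - 1)) := key
      _ ≤ (1 + K * F * |c| ^ (p - 1)) ^ (1 / (p - 1)) := by
          apply Real.rpow_le_rpow (by positivity) (by nlinarith) (le_of_lt hr)
  · rcases eq_or_ne c 0 with hc | hc
    · have : v = fun _ => 0 := funext fun t => by rw [hv t, hc, zero_div]
      rw [this]; exact tendsto_const_nhds
    · have hcp : 0 < |c| ^ (p - 1) := Real.rpow_pos_of_pos (abs_pos.mpr hc) _
      -- y - t → 0⁺
      have h1 : Tendsto (fun t => y - t) (𝓝[<] y) (𝓝[>] (0:ℝ)) := by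
        apply tendsto_nhdsWithin_of_tendsto_nhds_of_eventually_within
        · have hsub : Tendsto (fun t : ℝ => y - t) (𝓝 y) (𝓝 (y - y)) :=
            tendsto_const_nhds.sub tendsto_id
          simpa using hsub.mono_left nhdsWithin_le_nhds
        · filter_upwards [self_mem_nhdsWithin] with t ht
          exact mem_Ioi.mpr (by simp at ht; linarith)
      -- x^(2-p) → atTop as x → 0⁺
      have h2p : Tendsto (fun x : ℝ => x ^ (2 - p)) (𝓝[>] (0:ℝ)) atTop := by
        have h3 : Tendsto (fun x : ℝ => (x⁻¹) ^ (p - 2)) (𝓝[>] (0:ℝ)) atTop :=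
          (tendsto_rpow_atTop hp2).comp tendsto_inv_nhdsGT_zero
        refine h3.congr' ?_
        filter_upwards [self_mem_nhdsWithin] with x hx
        rw [← Real.rpow_neg_one x, ← Real.rpow_mul (le_of_lt hx)]
        congr 1
        ring
      have hFt : Tendsto (fun t => Fp p (y - t) y) (𝓝[<] y) atTop := by
        have : Tendsto (fun t => ((y - t) ^ (2 - p) - y ^ (2 - p)) / (p - 2))
            (𝓝[<] y) atTop := by
          apply Tendsto.atTop_div_const hp2
          apply tendsto_atTop_add_const_right
          exact h2p.comp h1
        exact this
      have hDt : Tendsto (fun t => 1 + K * Fp p (y - t) y * |c| ^ (p - 1))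
          (𝓝[<] y) atTop := by
        apply tendsto_atTop_add_const_left
        exact (hFt.const_mul_atTop hK).atTop_mul_const hcp
      have hDrt : Tendsto (fun t => (1 + K * Fp p (y - t) y * |c| ^ (p - 1))
          ^ (1 / (p - 1))) (𝓝[<] y) atTop :=
        (tendsto_rpow_atTop hr).comp hDt
      have := Tendsto.div_atTop (tendsto_const_nhds (x := c)) hDrt
      refine this.congr fun t => (hv t).symm
end

section
/- Let a < 0, p > 2, y > 0, and c ≠ 0. Since F_p(y-t,y) → +∞ as t → y⁻ and a < 0, there exists t* ∈ (0, y) such that 1 + a·2^{-p}(p-1)·F_p(y-t*,y)·|c|^{p-1} = 0, and |v(t)| → ∞ as t → t*⁻, where v(t) = c/(1 + a·2^{-p}(p-1)F_p(y-t,y)|c|^{p-1})^{1/(p-1)}. -/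
open Real Set Filter Topology

theorem stmt_4 (p a y c : ℝ) (hp : 2 < p) (ha : a < 0) (hy : 0 < y) (hc : c ≠ 0)
    (v : ℝ → ℝ)
    (hv : ∀ t, v t = c / (1 + a * 2 ^ (-p) * (p - 1) * Fp p (y - t) y * |c| ^ (p - 1))
        ^ (1 / (p - 1))) :
    ∃ tstar ∈ Set.Ioo 0 y,
      1 + a * 2 ^ (-p) * (p - 1) * Fp p (y - tstar) y * |c| ^ (p - 1) = 0 ∧
      Filter.Tendsto (fun t => |v t|) (nhdsWithin tstar (Set.Iio tstar)) Filter.atTop := by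
  set K : ℝ := a * 2 ^ (-p) * (p - 1) * |c| ^ (p - 1) with hK
  have hp2 : (0:ℝ) < p - 2 := by linarith
  have hKneg : K < 0 := by
    have h1 : (0:ℝ) < (2:ℝ) ^ (-p) := rpow_pos_of_pos (by norm_num) _
    have h2 : (0:ℝ) < p - 1 := by linarith
    have h3 : (0:ℝ) < |c| ^ (p - 1) := rpow_pos_of_pos (abs_pos.mpr hc) _
    have := mul_pos (mul_pos h1 h2) h3
    nlinarith
  set h : ℝ → ℝ := fun t => 1 + K * Fp p (y - t) y with hh
  have hcomm : ∀ t, 1 + a * 2 ^ (-p) * (p - 1) * Fp p (y - t) y * |c| ^ (p - 1) = h t := by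
    intro t; simp only [hh, hK]; ring
  have hh0 : h 0 = 1 := by simp [hh, Fp]
  -- continuity of h on Iio y
  have hcont : ContinuousOn h (Iio y) := by
    apply ContinuousOn.add continuousOn_const
    apply ContinuousOn.mul continuousOn_const
    unfold Fp
    apply ContinuousOn.div_const
    apply ContinuousOn.sub _ continuousOn_const
    intro t ht
    have : (y - t) ≠ 0 := by simp only [mem_Iio] at ht; intro hcon; linarith [sub_pos.mpr ht]
    exact ((Real.continuousAt_rpow_const (y - t) (2 - p) (Or.inl this)).comp
      (by fun_prop)).continuousWithinAt
  -- h is strictly antitone on Iio y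
  have hanti : StrictAntiOn h (Iio y) := by
    intro t₁ ht₁ t₂ ht₂ h12
    simp only [hh]
    have hx2 : (0:ℝ) < y - t₂ := by simp only [mem_Iio] at ht₂; linarith
    have hlt : (y - t₁) ^ (2 - p) < (y - t₂) ^ (2 - p) :=
      rpow_lt_rpow_of_neg hx2 (by linarith) (by linarith)
    have hFp : Fp p (y - t₁) y < Fp p (y - t₂) y := by
      unfold Fp
      exact (div_lt_div_iff_of_pos_right hp2).mpr (by linarith)
    nlinarith
  -- h tends to -∞ as t → y⁻
  have hbot : Tendsto h (𝓝[<] y) atBot := by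
    have h1 : Tendsto (fun t => y - t) (𝓝[<] y) (𝓝[>] (0:ℝ)) := by
      apply tendsto_nhdsWithin_of_tendsto_nhds_of_eventually_within
      · have : Tendsto (fun t => y - t) (𝓝 y) (𝓝 (y - y)) :=
          (continuous_const.sub continuous_id).tendsto y
        simpa using this.mono_left nhdsWithin_le_nhds
      · filter_upwards [self_mem_nhdsWithin] with t ht
        simp only [mem_Iio] at ht; simp [sub_pos.mpr ht]
    have h2 : Tendsto (fun z : ℝ => z ^ (2 - p)) (𝓝[>] (0:ℝ)) atTop := by
      have h3 : Tendsto (fun z : ℝ => (z⁻¹) ^ (p - 2)) (𝓝[>] (0:ℝ)) atTop :=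
        (tendsto_rpow_atTop hp2).comp tendsto_inv_nhdsGT_zero
      refine h3.congr' ?_
      filter_upwards [self_mem_nhdsWithin] with z hz
      rw [Real.inv_rpow (le_of_lt hz), ← Real.rpow_neg (le_of_lt hz)]
      ring_nf
    have hFtop : Tendsto (fun t => Fp p (y - t) y) (𝓝[<] y) atTop := by
      unfold Fp
      apply Tendsto.atTop_div_const hp2
      exact tendsto_atTop_add_const_right _ _ (h2.comp h1)
    have := (tendsto_const_mul_atBot_of_neg hKneg).mpr hFtop
    simpa [hh] using tendsto_atBot_add_const_left _ 1 this
  -- find s ∈ Ioo 0 y with h s < 0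
  obtain ⟨s, hs1, hs2⟩ : ∃ s, s ∈ Ioo 0 y ∧ h s < 0 := by
    have hev : ∀ᶠ t in 𝓝[<] y, h t < 0 := hbot.eventually (eventually_lt_atBot 0)
    have hev2 : Ioo 0 y ∈ 𝓝[<] y := by
      rw [mem_nhdsWithin]
      exact ⟨Ioi 0, isOpen_Ioi, hy, by intro t ⟨h1, h2⟩; exact ⟨h1, h2⟩⟩
    exact ((by filter_upwards [hev2] with t ht using ht : ∀ᶠ t in 𝓝[<] y, t ∈ Ioo 0 y).and
      hev).exists
  -- IVT gives tstar
  have hIcc : Icc (0:ℝ) s ⊆ Iio y := fun t ht => lt_of_le_of_lt ht.2 hs1.2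
  obtain ⟨tstar, htmem, htz⟩ :=
    intermediate_value_Ioo' (le_of_lt hs1.1) (hcont.mono hIcc)
      (show (0:ℝ) ∈ Ioo (h s) (h 0) by rw [hh0]; exact ⟨hs2, one_pos⟩)
  have htIoo : tstar ∈ Ioo 0 y := ⟨htmem.1, lt_trans htmem.2 hs1.2⟩
  refine ⟨tstar, htIoo, by rw [hcomm]; exact htz, ?_⟩
  -- positivity of h on Iio tstar
  have hpos : ∀ t ∈ Iio tstar, 0 < h t := by
    intro t ht
    simp only [mem_Iio] at ht
    have := hanti (show t ∈ Iio y from lt_trans ht htIoo.2) (mem_Iio.mpr htIoo.2) ht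
    rw [htz] at this; exact this
  -- h tends to 0 from the right along 𝓝[<] tstar
  have hto0 : Tendsto h (𝓝[<] tstar) (𝓝[>] (0:ℝ)) := by
    apply tendsto_nhdsWithin_of_tendsto_nhds_of_eventually_within
    · have := (hcont.continuousWithinAt (mem_Iio.mpr htIoo.2)).tendsto
      rw [htz] at this
      exact this.mono_left (nhdsWithin_mono _ (fun x hx => lt_trans (mem_Iio.mp hx) htIoo.2))
    · filter_upwards [self_mem_nhdsWithin] with t ht
      exact hpos t ht
  -- the rpow of h tends to 0 from the right
  have hq : (0:ℝ) < 1 / (p - 1) := div_pos one_pos (by linarith)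
  have hrto0 : Tendsto (fun t => (h t) ^ (1 / (p - 1))) (𝓝[<] tstar) (𝓝[>] (0:ℝ)) := by
    apply tendsto_nhdsWithin_of_tendsto_nhds_of_eventually_within
    · have hc0 : ContinuousAt (fun z : ℝ => z ^ (1 / (p - 1))) 0 :=
        Real.continuousAt_rpow_const 0 _ (Or.inr hq.le)
      have := hc0.tendsto
      rw [Real.zero_rpow (ne_of_gt hq)] at this
      exact this.comp (hto0.mono_right nhdsWithin_le_nhds)
    · filter_upwards [self_mem_nhdsWithin] with t ht
      exact Real.rpow_pos_of_pos (hpos t ht) _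
  -- conclude
  have htop : Tendsto (fun t => |c| * ((h t) ^ (1 / (p - 1)))⁻¹) (𝓝[<] tstar) atTop :=
    (tendsto_const_mul_atTop_of_pos (abs_pos.mpr hc)).mpr hrto0.inv_tendsto_nhdsGT_zero
  refine htop.congr' ?_
  filter_upwards [self_mem_nhdsWithin] with t ht
  rw [hv t, hcomm t, abs_div, abs_of_pos (Real.rpow_pos_of_pos (hpos t ht) _)]
  exact (div_eq_mul_inv _ _).symm
end

section
/- Let q ≥ 1 and let v_± ∈ C¹([0,T] × ℝ₊) satisfy (∂_t ± ∂_r)v_± = -a·2^{-p} r^{1-p} |v_- + v_+|^{p-1}(v_- + v_+) on {r > 0} with v_-(t,0) + v_+(t,0) = 0, where a > 0, p > 1. Then the pointwise inequality ∂_t(|v_-|^q + |v_+|^q) - ∂_r(|v_-|^q - |v_+|^q) ≤ 0 holds on {r > 0}. -/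
open Real Set

/-!
Along the characteristics the energy flux splits as
`∂_t(|v₋|^q + |v₊|^q) - ∂_r(|v₋|^q - |v₊|^q) = (∂_t - ∂_r)|v₋|^q + (∂_t + ∂_r)|v₊|^q`,
and by the chain rule and the equations this equals `-q K s (g v₋ + g v₊)` with `K ≥ 0`,
`s = v₋ + v₊` and `g v = sign v |v|^(q-1)`. The map `g` is odd, and monotone as `q ≥ 1`, so
`s (g v₋ + g v₊) ≥ 0`.
-/

lemma sign_mul_abs_rpow_neg (r x : ℝ) :
    (SignType.sign (-x) : ℝ) * |-x| ^ r = -((SignType.sign x : ℝ) * |x| ^ r) := by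
  rw [Left.sign_neg, abs_neg, SignType.coe_neg, neg_mul]

lemma monotone_sign_mul_abs_rpow {r : ℝ} (hr : 0 ≤ r) :
    Monotone fun x : ℝ => (SignType.sign x : ℝ) * |x| ^ r := by
  refine monotone_of_odd_of_monotoneOn_nonneg (sign_mul_abs_rpow_neg r) ?_
  intro x hx y hy hxy
  rcases (mem_Ici.1 hx).eq_or_lt with rfl | hx
  · rcases (mem_Ici.1 hy).eq_or_lt with rfl | hy
    · rfl
    · simp only [_root_.sign_zero, _root_.sign_pos hy, SignType.coe_zero, SignType.coe_one,
        zero_mul, one_mul]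
      positivity
  · have hy : 0 < y := hx.trans_le hxy
    simp only [_root_.sign_pos hx, _root_.sign_pos hy, SignType.coe_one, one_mul, abs_of_pos hx,
      abs_of_pos hy]
    exact rpow_le_rpow hx.le hxy hr

lemma add_mul_add_nonneg_of_monotone_of_odd {α : Type*} [Ring α] [LinearOrder α]
    [IsStrictOrderedRing α] {f : α → α} (hf : Monotone f) (hodd : ∀ x, f (-x) = -f x)
    (x y : α) : 0 ≤ (x + y) * (f x + f y) := by
  rcases le_total 0 (x + y) with hs | hs
  · have : -f y ≤ f x := hodd y ▸ hf (neg_le_iff_add_nonneg.2 hs)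
    exact mul_nonneg hs (neg_le_iff_add_nonneg.1 this)
  · have : f x ≤ -f y := hodd y ▸ hf (le_neg_iff_add_nonpos_right.2 hs)
    exact mul_nonneg_of_nonpos_of_nonpos hs (le_neg_iff_add_nonpos_right.1 this)

section Calculus

variable {E : Type*} [NormedAddCommGroup E] [NormedSpace ℝ E]

lemma fderiv_abs_rpow_apply {v : E → ℝ} {x : E} (hv : DifferentiableAt ℝ v x) (q : ℝ)
    (w : E) : fderiv ℝ (fun y => |v y| ^ q) x w =
      q * ((SignType.sign (v x) : ℝ) * |v x| ^ (q - 1)) * fderiv ℝ v x w := by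
  by_cases hq : q = 0
  · simp [hq]
  by_cases h : v x = 0
  · have hmin : IsLocalMin (fun y => |v y| ^ q) x :=
      Filter.Eventually.of_forall fun y => by
        simp only [h, abs_zero, zero_rpow hq]
        positivity
    simp [hmin.fderiv_eq_zero, h]
  · rw [((hv.hasFDerivAt.abs h).rpow_const (Or.inl (abs_ne_zero.2 h))).fderiv]
    simp only [smul_apply, smul_eq_mul]
    ring

lemma DifferentiableAt.of_add_of_sub {f g : E → ℝ} {x : E}
    (hs : DifferentiableAt ℝ (fun y => f y + g y) x)
    (hd : DifferentiableAt ℝ (fun y => f y - g y) x) :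
    DifferentiableAt ℝ f x ∧ DifferentiableAt ℝ g x := by
  constructor
  · have hf : f = fun y => ((f y + g y) + (f y - g y)) * 2⁻¹ := by ext y; ring
    exact hf ▸ (hs.add hd).mul_const _
  · have hg : g = fun y => ((f y + g y) - (f y - g y)) * 2⁻¹ := by ext y; ring
    exact hg ▸ (hs.sub hd).mul_const _

lemma fderiv_add_apply_sub_fderiv_sub_apply {f g : E → ℝ} {x : E}
    (hf : DifferentiableAt ℝ f x) (hg : DifferentiableAt ℝ g x) (u w : E) :
    fderiv ℝ (fun y => f y + g y) x u - fderiv ℝ (fun y => f y - g y) x w =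
      fderiv ℝ f x (u - w) + fderiv ℝ g x (u + w) := by
  rw [fderiv_fun_add hf hg, fderiv_fun_sub hf hg]
  simp only [add_apply, sub_apply, map_add, map_sub]
  ring

end Calculus

theorem stmt_13_general (q p a : ℝ) (hq : 1 ≤ q) (ha : 0 < a) (T : ℝ)
    (vm vp : ℝ × ℝ → ℝ)
    (hvm : Differentiable ℝ vm) (hvp : Differentiable ℝ vp)
    (hE : Differentiable ℝ (fun x : ℝ × ℝ => |vm x| ^ q + |vp x| ^ q))
    (hF : Differentiable ℝ (fun x : ℝ × ℝ => |vm x| ^ q - |vp x| ^ q))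
    (heqm : ∀ t ∈ Set.Icc 0 T, ∀ r : ℝ, 0 < r →
      fderiv ℝ vm (t, r) (1, -1) =
        -a * 2 ^ (-p) * r ^ (1 - p) *
          |vm (t, r) + vp (t, r)| ^ (p - 1) * (vm (t, r) + vp (t, r)))
    (heqp : ∀ t ∈ Set.Icc 0 T, ∀ r : ℝ, 0 < r →
      fderiv ℝ vp (t, r) (1, 1) =
        -a * 2 ^ (-p) * r ^ (1 - p) *
          |vm (t, r) + vp (t, r)| ^ (p - 1) * (vm (t, r) + vp (t, r))) :
    ∀ t ∈ Set.Icc 0 T, ∀ r : ℝ, 0 < r →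
      fderiv ℝ (fun x : ℝ × ℝ => |vm x| ^ q + |vp x| ^ q) (t, r) (1, 0) -
        fderiv ℝ (fun x : ℝ × ℝ => |vm x| ^ q - |vp x| ^ q) (t, r) (0, 1) ≤ 0 := by
  intro t ht r hr
  obtain ⟨hgm, hgp⟩ := DifferentiableAt.of_add_of_sub (hE (t, r)) (hF (t, r))
  rw [fderiv_add_apply_sub_fderiv_sub_apply hgm hgp, Prod.mk_sub_mk, Prod.mk_add_mk,
    sub_zero, zero_sub, add_zero, zero_add, fderiv_abs_rpow_apply (hvm _),
    fderiv_abs_rpow_apply (hvp _), heqm t ht r hr, heqp t ht r hr]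
  have hK : 0 ≤ a * 2 ^ (-p) * r ^ (1 - p) * |vm (t, r) + vp (t, r)| ^ (p - 1) := by positivity
  have hsign := add_mul_add_nonneg_of_monotone_of_odd
    (monotone_sign_mul_abs_rpow (sub_nonneg.2 hq)) (sign_mul_abs_rpow_neg _) (vm (t, r)) (vp (t, r))
  nlinarith [mul_nonneg (mul_nonneg (zero_le_one.trans hq) hK) hsign]

/-- Dissipative energy inequality: if `(∂_t ∓ ∂_r) v_± = -a 2^{-p} r^{1-p} |v₋+v₊|^{p-1}(v₋+v₊)`
with `a > 0` and `v₋(t,0) + v₊(t,0) = 0`, then pointwise on `{r > 0}`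
`∂_t(|v₋|^q + |v₊|^q) - ∂_r(|v₋|^q - |v₊|^q) ≤ 0`. -/
theorem stmt_13 (q p a : ℝ) (hq : 1 ≤ q) (hp : 1 < p) (ha : 0 < a) (T : ℝ)
    (vm vp : ℝ × ℝ → ℝ)
    (hvm : Differentiable ℝ vm) (hvp : Differentiable ℝ vp)
    (hE : Differentiable ℝ (fun x : ℝ × ℝ => |vm x| ^ q + |vp x| ^ q))
    (hF : Differentiable ℝ (fun x : ℝ × ℝ => |vm x| ^ q - |vp x| ^ q))
    (heqm : ∀ t ∈ Set.Icc 0 T, ∀ r : ℝ, 0 < r →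
      fderiv ℝ vm (t, r) (1, -1) =
        -a * 2 ^ (-p) * r ^ (1 - p) *
          |vm (t, r) + vp (t, r)| ^ (p - 1) * (vm (t, r) + vp (t, r)))
    (heqp : ∀ t ∈ Set.Icc 0 T, ∀ r : ℝ, 0 < r →
      fderiv ℝ vp (t, r) (1, 1) =
        -a * 2 ^ (-p) * r ^ (1 - p) *
          |vm (t, r) + vp (t, r)| ^ (p - 1) * (vm (t, r) + vp (t, r)))
    (hbc : ∀ t ∈ Set.Icc 0 T, vm (t, 0) + vp (t, 0) = 0) :
    ∀ t ∈ Set.Icc 0 T, ∀ r : ℝ, 0 < r →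
      fderiv ℝ (fun x : ℝ × ℝ => |vm x| ^ q + |vp x| ^ q) (t, r) (1, 0) -
        fderiv ℝ (fun x : ℝ × ℝ => |vm x| ^ q - |vp x| ^ q) (t, r) (0, 1) ≤ 0 :=
  stmt_13_general q p a hq ha T vm vp hvm hvp hE hF heqm heqp
end
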